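/- For a matroid M and disjoint subsets Q, R of E(M), there exists a minor N of M with ground set E(N) = Q ∪ R such that λ_N(Q) = κ_M(Q,R) (Tutte's linking theorem). -/

import Mathlib

open Set

variable {α : Type*}

/-- The rank of a set `X` in a matroid `M`: the supremum of cardinalities of
independent subsets of `X`. -/
noncomputable def Matroid.rk' (M : Matroid α) (X : Set α) : ℕ :=
  sSup {n | ∃ I, M.Indep I ∧ I ⊆ X ∧ I.ncard = n}

/-- The connectivity function `λ_M(X) = r(X) + r(E \ X) - r(M)`. -/
noncomputable def Matroid.lam (M : Matroid α) (X : Set α) : ℕ :=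
  M.rk' X + M.rk' (M.E \ X) - M.rk' M.E

/-- The connectivity `κ_M(Q,R)` between disjoint sets `Q` and `R`. -/
noncomputable def Matroid.kappa (M : Matroid α) (Q R : Set α) : ℕ :=
  sInf {k | ∃ X, Q ⊆ X ∧ X ⊆ M.E \ R ∧ M.lam X = k}

/-- Deletion of a set of elements. -/
def Matroid.del (M : Matroid α) (D : Set α) : Matroid α := M.restrict (M.E \ D)

/-- Contraction of a set of elements, defined via duality: `M / C = (M* \ C)*`. -/
def Matroid.con (M : Matroid α) (C : Set α) : Matroid α := (M✶.del C)✶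

/-- `N` is a minor of `M` if it is obtained by contracting a set `C` and deleting a
disjoint set `D`. -/
def Matroid.IsMinorOf (N M : Matroid α) : Prop :=
  ∃ C D, C ⊆ M.E ∧ D ⊆ M.E ∧ Disjoint C D ∧ N = (M.con C).del D

/-- `e` is deletable with respect to `(Q,R)`. -/
noncomputable def Matroid.Deletable (M : Matroid α) (Q R : Set α) (e : α) : Prop :=
  (M.del {e}).kappa Q R = M.kappa Q R

/-- `e` is contractible with respect to `(Q,R)`. -/
noncomputable def Matroid.Contractible (M : Matroid α) (Q R : Set α) (e : α) : Prop :=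
  (M.con {e}).kappa Q R = M.kappa Q R

/-- `e` is flexible with respect to `(Q,R)` if it is both deletable and contractible. -/
noncomputable def Matroid.Flexible (M : Matroid α) (Q R : Set α) (e : α) : Prop :=
  M.Deletable Q R e ∧ M.Contractible Q R e

/-- The local connectivity `⊓_M(A,B) = r(A) + r(B) - r(A ∪ B)`. -/
noncomputable def Matroid.localConn (M : Matroid α) (A B : Set α) : ℕ :=
  M.rk' A + M.rk' B - M.rk' (A ∪ B)

/-!
Induct on the elements outside `Q ∪ R`. Deleting or contracting such an element `e` never
raises `κ(Q, R)`, and one of the two preserves it: if `X` and `Y` separated `Q` from `R` in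
`M ＼ e` and `M ／ e` with order below `κ_M(Q, R)`, submodularity of the rank would give
`λ_M(X ∩ Y) + λ_M(X ∪ Y ∪ e) ≤ λ_{M ＼ e}(X) + λ_{M ／ e}(Y) + 1 < 2 κ_M(Q, R)`,
although both sets on the left separate `Q` from `R` in `M`.
Once `E = Q ∪ R`, the only separation is `Q`.
-/

namespace Matroid

variable {M N : Matroid α} {C D Q R X Y : Set α} {e : α}

lemma isMinorOf_iff_isMinor : N.IsMinorOf M ↔ N ≤m M :=
  ⟨fun ⟨C, D, _, _, _, h⟩ ↦ ⟨C, D, h⟩, fun h ↦ h.exists_eq_contract_delete_disjoint⟩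

lemma cast_rk'_eq_eRk [M.RankFinite] (X : Set α) : (M.rk' X : ℕ∞) = M.eRk X := by
  obtain ⟨I, hI⟩ := M.exists_isBasis' X
  have hmax : IsGreatest {n | ∃ J, M.Indep J ∧ J ⊆ X ∧ J.ncard = n} I.ncard := by
    refine ⟨⟨I, hI.indep, hI.subset, rfl⟩, ?_⟩
    rintro _ ⟨J, hJ, hJX, rfl⟩
    have hle : J.encard ≤ I.encard := hI.encard_eq_eRk ▸ hJ.encard_le_eRk_of_subset hJX
    rwa [← hJ.finite.cast_ncard_eq, ← hI.indep.finite.cast_ncard_eq, Nat.cast_le] at hle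
  rw [rk', hmax.csSup_eq, hI.indep.finite.cast_ncard_eq, hI.encard_eq_eRk]

lemma eRk_contract_add_eRk (hXC : Disjoint X C) : (M ／ C).eRk X + M.eRk C = M.eRk (X ∪ C) := by
  obtain ⟨J, hJ⟩ := M.exists_isBasis' C
  obtain ⟨K, hK, hJK⟩ :=
    hJ.indep.subset_isBasis'_of_subset (hJ.subset.trans (subset_union_right (s := X)))
  have hKC : (M ／ C).IsBasis' (K \ C) X := by
    simpa [hXC.sdiff_eq_left] using
      hK.contract_isBasis' hJ (hK.indep.subset (union_subset sdiff_subset hJK))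
  have hKJ : (K ∩ C).encard = J.encard :=
    le_antisymm (hJ.encard_eq_eRk ▸ (hK.indep.inter_right C).encard_le_eRk_of_subset
      inter_subset_right) (encard_le_encard (subset_inter hJK hJ.subset))
  rw [← hKC.encard_eq_eRk, ← hJ.encard_eq_eRk, ← hKJ, encard_sdiff_add_encard_inter,
    hK.encard_eq_eRk]

lemma kappa_le_lam (hQX : Q ⊆ X) (hXR : X ⊆ M.E \ R) : M.kappa Q R ≤ M.lam X :=
  Nat.sInf_le ⟨X, hQX, hXR, rfl⟩

lemma exists_lam_eq_kappa (hQ : Q ⊆ M.E) (hQR : Disjoint Q R) :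
    ∃ X, Q ⊆ X ∧ X ⊆ M.E \ R ∧ M.lam X = M.kappa Q R :=
  Nat.sInf_mem (s := {k | ∃ X, Q ⊆ X ∧ X ⊆ M.E \ R ∧ M.lam X = k})
    ⟨M.lam Q, Q, subset_rfl, subset_sdiff.2 ⟨hQ, hQR⟩, rfl⟩

lemma kappa_eq_lam_of_ground_eq (hE : M.E = Q ∪ R) (hQR : Disjoint Q R) :
    M.kappa Q R = M.lam Q := by
  obtain ⟨X, hQX, hXR, hX⟩ := exists_lam_eq_kappa (hE ▸ subset_union_left) hQR
  rw [hE] at hXR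
  rw [← hX, (show X ⊆ Q by tauto_set).antisymm hQX]

section RankFinite

variable [M.RankFinite]

lemma rk'_mono (h : X ⊆ Y) : M.rk' X ≤ M.rk' Y := by
  have := M.eRk_mono h
  rwa [← cast_rk'_eq_eRk, ← cast_rk'_eq_eRk, Nat.cast_le] at this

lemma rk'_inter_add_rk'_union_le (X Y : Set α) :
    M.rk' (X ∩ Y) + M.rk' (X ∪ Y) ≤ M.rk' X + M.rk' Y := by
  have := M.eRk_inter_add_eRk_union_le X Y
  simp only [← cast_rk'_eq_eRk] at this
  exact_mod_cast this

lemma rk'_union_le (X Y : Set α) : M.rk' (X ∪ Y) ≤ M.rk' X + M.rk' Y := by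
  have := M.eRk_union_le_eRk_add_eRk X Y
  simp only [← cast_rk'_eq_eRk] at this
  exact_mod_cast this

lemma rk'_singleton_le (e : α) : M.rk' {e} ≤ 1 := by
  have := M.eRk_singleton_le e
  rwa [← cast_rk'_eq_eRk, Nat.cast_le_one] at this

lemma rk'_delete (hX : X ⊆ M.E \ D) : (M ＼ D).rk' X = M.rk' X := by
  have := restrict_eRk_eq M hX
  rwa [← delete_eq_restrict, ← cast_rk'_eq_eRk, ← cast_rk'_eq_eRk, Nat.cast_inj] at this

lemma rk'_contract_add_rk' (hXC : Disjoint X C) :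
    (M ／ C).rk' X + M.rk' C = M.rk' (X ∪ C) := by
  have := eRk_contract_add_eRk (M := M) hXC
  simp only [← cast_rk'_eq_eRk] at this
  exact_mod_cast this

lemma lam_add_rk'_ground (X : Set α) :
    M.lam X + M.rk' M.E = M.rk' X + M.rk' (M.E \ X) := by
  have h : M.rk' M.E ≤ M.rk' X + M.rk' (M.E \ X) :=
    (rk'_mono (by simp)).trans (M.rk'_union_le X (M.E \ X))
  unfold lam
  omega

lemma lam_delete_add_rk' (hX : X ⊆ M.E \ D) :
    (M ＼ D).lam X + M.rk' (M.E \ D) = M.rk' X + M.rk' (M.E \ (D ∪ X)) := by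
  have h := (M ＼ D).lam_add_rk'_ground X
  rwa [delete_ground, rk'_delete hX, rk'_delete sdiff_subset, rk'_delete subset_rfl,
    sdiff_sdiff] at h

lemma lam_contract_add_rk' (hC : C ⊆ M.E) (hX : X ⊆ M.E \ C) :
    (M ／ C).lam X + M.rk' M.E + M.rk' C = M.rk' (X ∪ C) + M.rk' (M.E \ X) := by
  have h := (M ／ C).lam_add_rk'_ground X
  have hX' := rk'_contract_add_rk' (M := M) (subset_sdiff.1 hX).2
  have hXc := rk'_contract_add_rk' (M := M) (X := (M.E \ C) \ X) (C := C)
    (disjoint_sdiff_left.mono_left sdiff_subset)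
  have hE := rk'_contract_add_rk' (M := M) (X := M.E \ C) (C := C) disjoint_sdiff_left
  rw [contract_ground] at h
  rw [show (M.E \ C) \ X ∪ C = M.E \ X by tauto_set] at hXc
  rw [sdiff_union_self, union_eq_self_of_subset_right hC] at hE
  omega

lemma lam_delete_sdiff_singleton_le (he : e ∈ M.E) (hX : X ⊆ M.E) :
    (M ＼ {e}).lam (X \ {e}) ≤ M.lam X := by
  have hdel := lam_delete_add_rk' (M := M) (D := {e}) (X := X \ {e}) (by tauto_set)
  have hM := M.lam_add_rk'_ground X
  have heE : {e} ⊆ M.E := singleton_subset_iff.2 he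
  by_cases heX : e ∈ X
  · have heX' : {e} ⊆ X := singleton_subset_iff.2 heX
    have hsub : M.rk' (X \ {e}) + M.rk' M.E ≤ M.rk' X + M.rk' (M.E \ {e}) := by
      convert M.rk'_inter_add_rk'_union_le X (M.E \ {e}) using 3 <;> tauto_set
    rw [show M.E \ ({e} ∪ X \ {e}) = M.E \ X by tauto_set] at hdel
    omega
  · have heX' : Disjoint X {e} := disjoint_singleton_right.2 heX
    have hsub :
        M.rk' (M.E \ ({e} ∪ X)) + M.rk' M.E ≤ M.rk' (M.E \ X) + M.rk' (M.E \ {e}) := by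
      convert M.rk'_inter_add_rk'_union_le (M.E \ X) (M.E \ {e}) using 3 <;> tauto_set
    rw [sdiff_singleton_eq_self heX] at hdel ⊢
    omega

lemma lam_contract_sdiff_singleton_le (he : e ∈ M.E) (hX : X ⊆ M.E) :
    (M ／ {e}).lam (X \ {e}) ≤ M.lam X := by
  have hcon := lam_contract_add_rk' (M := M) (C := {e}) (X := X \ {e})
    (singleton_subset_iff.2 he) (by tauto_set)
  have hM := M.lam_add_rk'_ground X
  have heE : {e} ⊆ M.E := singleton_subset_iff.2 he
  by_cases heX : e ∈ X
  · have heX' : {e} ⊆ X := singleton_subset_iff.2 heX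
    have hsub := M.rk'_union_le (M.E \ X) {e}
    rw [show X \ {e} ∪ {e} = X by tauto_set,
      show M.E \ (X \ {e}) = M.E \ X ∪ {e} by tauto_set] at hcon
    omega
  · have hsub := M.rk'_union_le X {e}
    rw [sdiff_singleton_eq_self heX] at hcon ⊢
    omega

lemma lam_inter_add_lam_union_le_delete_add_contract (he : e ∈ M.E) (hX : X ⊆ M.E \ {e})
    (hY : Y ⊆ M.E \ {e}) :
    M.lam (X ∩ Y) + M.lam (X ∪ Y ∪ {e}) ≤ (M ＼ {e}).lam X + (M ／ {e}).lam Y + 1 := by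
  have heE : {e} ⊆ M.E := singleton_subset_iff.2 he
  have hdel := lam_delete_add_rk' hX
  have hcon := lam_contract_add_rk' heE hY
  have hinter := M.lam_add_rk'_ground (X ∩ Y)
  have hunion := M.lam_add_rk'_ground (X ∪ Y ∪ {e})
  have hsub : M.rk' (X ∩ Y) + M.rk' (X ∪ Y ∪ {e}) ≤ M.rk' X + M.rk' (Y ∪ {e}) := by
    convert M.rk'_inter_add_rk'_union_le X (Y ∪ {e}) using 3 <;> tauto_set
  have hsub' : M.rk' (M.E \ (X ∪ Y ∪ {e})) + M.rk' (M.E \ (X ∩ Y)) ≤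
      M.rk' (M.E \ ({e} ∪ X)) + M.rk' (M.E \ Y) := by
    convert M.rk'_inter_add_rk'_union_le (M.E \ ({e} ∪ X)) (M.E \ Y) using 3 <;> tauto_set
  have hmono := M.rk'_mono (sdiff_subset : M.E \ {e} ⊆ M.E)
  have hsing := M.rk'_singleton_le e
  omega

lemma kappa_delete_le (he : e ∈ M.E) (heQ : e ∉ Q) (hQ : Q ⊆ M.E) (hQR : Disjoint Q R) :
    (M ＼ {e}).kappa Q R ≤ M.kappa Q R := by
  obtain ⟨X, hQX, hXR, hX⟩ := exists_lam_eq_kappa hQ hQR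
  calc (M ＼ {e}).kappa Q R ≤ (M ＼ {e}).lam (X \ {e}) :=
        kappa_le_lam (subset_sdiff_singleton hQX heQ) (by rw [delete_ground]; tauto_set)
    _ ≤ M.lam X := lam_delete_sdiff_singleton_le he (hXR.trans sdiff_subset)
    _ = M.kappa Q R := hX

lemma kappa_contract_le (he : e ∈ M.E) (heQ : e ∉ Q) (hQ : Q ⊆ M.E) (hQR : Disjoint Q R) :
    (M ／ {e}).kappa Q R ≤ M.kappa Q R := by
  obtain ⟨X, hQX, hXR, hX⟩ := exists_lam_eq_kappa hQ hQR
  calc (M ／ {e}).kappa Q R ≤ (M ／ {e}).lam (X \ {e}) :=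
        kappa_le_lam (subset_sdiff_singleton hQX heQ) (by rw [contract_ground]; tauto_set)
    _ ≤ M.lam X := lam_contract_sdiff_singleton_le he (hXR.trans sdiff_subset)
    _ = M.kappa Q R := hX

lemma deletable_or_contractible (he : e ∈ M.E) (heQ : e ∉ Q) (heR : e ∉ R) (hQ : Q ⊆ M.E)
    (hQR : Disjoint Q R) : M.Deletable Q R e ∨ M.Contractible Q R e := by
  by_contra! h
  have hdel := (kappa_delete_le he heQ hQ hQR).lt_of_ne h.1
  have hcon := (kappa_contract_le he heQ hQ hQR).lt_of_ne h.2
  have hQe : Q ⊆ M.E \ {e} := subset_sdiff_singleton hQ heQ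
  obtain ⟨X, hQX, hXR, hX⟩ := exists_lam_eq_kappa (M := M ＼ {e}) hQe hQR
  obtain ⟨Y, hQY, hYR, hY⟩ := exists_lam_eq_kappa (M := M ／ {e}) hQe hQR
  rw [delete_ground] at hXR
  rw [contract_ground] at hYR
  have heR' : {e} ⊆ M.E \ R := singleton_subset_iff.2 ⟨he, heR⟩
  have hXR' : X ⊆ M.E \ R := hXR.trans (sdiff_subset_sdiff_left sdiff_subset)
  have hYR' : Y ⊆ M.E \ R := hYR.trans (sdiff_subset_sdiff_left sdiff_subset)
  have hinter := kappa_le_lam (subset_inter hQX hQY) (inter_subset_left.trans hXR')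
  have hunion := kappa_le_lam (X := X ∪ Y ∪ {e})
    (hQX.trans (subset_union_left.trans subset_union_left))
    (union_subset (union_subset hXR' hYR') heR')
  have hsubmod := lam_inter_add_lam_union_le_delete_add_contract he (hXR.trans sdiff_subset)
    (hYR.trans sdiff_subset)
  omega

end RankFinite

end Matroid

open Matroid in
theorem stmt_2 (M : Matroid α) [M.Finite] (Q R : Set α) (hQ : Q ⊆ M.E) (hR : R ⊆ M.E)
    (hQR : Disjoint Q R) :
    ∃ N : Matroid α, N.IsMinorOf M ∧ N.E = Q ∪ R ∧ N.lam Q = M.kappa Q R := by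
  simp_rw [isMinorOf_iff_isMinor]
  induction hn : M.E.ncard using Nat.strong_induction_on generalizing M with
  | _ n ih =>
  by_cases hE : M.E ⊆ Q ∪ R
  · have hE' : M.E = Q ∪ R := hE.antisymm (union_subset hQ hR)
    exact ⟨M, IsMinor.refl, hE', (kappa_eq_lam_of_ground_eq hE' hQR).symm⟩
  obtain ⟨e, he, heQR⟩ := not_subset.1 hE
  rw [mem_union, not_or] at heQR
  obtain ⟨M', hM'M, hM'E, hκ⟩ :
      ∃ M' : Matroid α, M' ≤m M ∧ M'.E = M.E \ {e} ∧ M'.kappa Q R = M.kappa Q R := by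
    obtain h | h := deletable_or_contractible he heQR.1 heQR.2 hQ hQR
    · exact ⟨M ＼ {e}, ⟨∅, {e}, by simp⟩, rfl, h⟩
    · exact ⟨M ／ {e}, ⟨{e}, ∅, by simp⟩, rfl, h⟩
  have : M'.Finite := ⟨hM'E ▸ M.ground_finite.sdiff⟩
  obtain ⟨N, hNM', hNE, hN⟩ :=
    ih _ (hn ▸ hM'E ▸ ncard_sdiff_singleton_lt_of_mem he M.ground_finite) M'
      (hM'E ▸ subset_sdiff_singleton hQ heQR.1) (hM'E ▸ subset_sdiff_singleton hR heQR.2) rfl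
  exact ⟨N, hNM'.trans hM'M, hNE, hN.trans hκ⟩
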